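/- Let $E\subset\mathbb{R}^n$ be weakly porous with constants $0<c,\delta<1$. If $Q\subset R$ are cubes with $|R|=2^n|Q|$, then there exists $k=k(n,c)\in\mathbb{N}$ such that $|\mathcal{M}(R)|\le 4^{nk}\delta^{-k}|\mathcal{M}(Q)|$. -/

import Mathlib

open MeasureTheory Metric Set

noncomputable section

/-- An axis-parallel half-open cube in `ℝⁿ`, given by its lower corner and side length. -/
structure Cube (n : ℕ) where
  a : EuclideanSpace ℝ (Fin n)
  l : ℝ
  pos : 0 < l

/-- The set of points of a cube. -/
def Cube.set {n : ℕ} (P : Cube n) : Set (EuclideanSpace ℝ (Fin n)) :=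
  {x | ∀ i, P.a i ≤ x i ∧ x i < P.a i + P.l}

/-- A weight: locally integrable and a.e. positive. -/
def IsWeight {n : ℕ} (w : EuclideanSpace ℝ (Fin n) → ℝ) : Prop :=
  LocallyIntegrable w volume ∧ ∀ᵐ x ∂(volume : Measure (EuclideanSpace ℝ (Fin n))), 0 < w x

/-- The `A₁` inequality with constant `C`, over all axis-parallel cubes. -/
def A1With {n : ℕ} (w : EuclideanSpace ℝ (Fin n) → ℝ) (C : ℝ) : Prop :=
  ∀ P : Cube n, (⨍ x in P.set, w x) ≤ C * essInf w (volume.restrict P.set)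

/-- Membership in the Muckenhoupt class `A₁`. -/
def MemA1 {n : ℕ} (w : EuclideanSpace ℝ (Fin n) → ℝ) : Prop :=
  IsWeight w ∧ ∃ C : ℝ, A1With w C

/-- The `A_p` inequality with constant `C`, over all axis-parallel cubes. -/
def ApWith {n : ℕ} (w : EuclideanSpace ℝ (Fin n) → ℝ) (p C : ℝ) : Prop :=
  ∀ P : Cube n,
    (⨍ x in P.set, w x) * (⨍ x in P.set, w x ^ (1 / (1 - p))) ^ (p - 1) ≤ C

/-- Membership in the Muckenhoupt class `A_p`. -/
def MemAp {n : ℕ} (w : EuclideanSpace ℝ (Fin n) → ℝ) (p : ℝ) : Prop :=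
  IsWeight w ∧ ∃ C : ℝ, ApWith w p C

/-- `Q` is a dyadic subcube of `P`. -/
def IsDyadicSubcube {n : ℕ} (P Q : Cube n) : Prop :=
  ∃ (j : ℕ) (k : Fin n → ℕ), (∀ i, k i < 2 ^ j) ∧
    Q.l = P.l / 2 ^ j ∧ ∀ i, Q.a i = P.a i + P.l * k i / 2 ^ j

/-- A cube is `E`-free if it does not meet `E`. -/
def EFree {n : ℕ} (E : Set (EuclideanSpace ℝ (Fin n))) (Q : Cube n) : Prop :=
  Q.set ∩ E = ∅

/-- The measure `|𝓜(P)|` of a largest `E`-free dyadic subcube of `P`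
(`0` if there is none). -/
def maxFree {n : ℕ} (E : Set (EuclideanSpace ℝ (Fin n))) (P : Cube n) : ℝ :=
  sSup {v : ℝ | ∃ Q : Cube n, IsDyadicSubcube P Q ∧ EFree E Q ∧ v = (volume Q.set).toReal}

/-- Weak porosity with constants `c`, `δ`. -/
def WeaklyPorousWith {n : ℕ} (E : Set (EuclideanSpace ℝ (Fin n))) (c δ : ℝ) : Prop :=
  ∀ P : Cube n, ∃ (N : ℕ) (Q : Fin N → Cube n),
    (∀ k, IsDyadicSubcube P (Q k) ∧ EFree E (Q k)) ∧
    (∀ k m, k ≠ m → Disjoint (Q k).set (Q m).set) ∧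
    (∀ k, δ * maxFree E P ≤ (volume (Q k).set).toReal) ∧
    c * (volume P.set).toReal ≤ ∑ k, (volume (Q k).set).toReal

/-- A set is weakly porous if it is weakly porous with some constants `0 < c, δ < 1`. -/
def WeaklyPorous {n : ℕ} (E : Set (EuclideanSpace ℝ (Fin n))) : Prop :=
  ∃ c δ : ℝ, 0 < c ∧ c < 1 ∧ 0 < δ ∧ δ < 1 ∧ WeaklyPorousWith E c δ

/-- Porosity. -/
def Porous {n : ℕ} (E : Set (EuclideanSpace ℝ (Fin n))) : Prop :=
  ∃ c : ℝ, 0 < c ∧ ∀ (x : EuclideanSpace ℝ (Fin n)) (r : ℝ), 0 < r →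
    ∃ y : EuclideanSpace ℝ (Fin n), ball y (c * r) ⊆ ball x r \ E

/-- The distance weight `dist(·,E)^{-α}`. -/
def distw {n : ℕ} (E : Set (EuclideanSpace ℝ (Fin n))) (α : ℝ)
    (x : EuclideanSpace ℝ (Fin n)) : ℝ :=
  infDist x E ^ (-α)

/-- `h_E(B(x,R))`: the supremum of radii `t` of balls contained in `B(x,R) \ E`. -/
def hFree {n : ℕ} (E : Set (EuclideanSpace ℝ (Fin n))) (x : EuclideanSpace ℝ (Fin n))
    (R : ℝ) : ℝ :=
  sSup {t : ℝ | ∃ y ∈ ball x R, ball y t ⊆ ball x R \ E}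

/-- The set of admissible exponents in the definition of the Muckenhoupt exponent. -/
def MuckSet {n : ℕ} (E : Set (EuclideanSpace ℝ (Fin n))) : Set ℝ :=
  {α : ℝ | ∃ C : ℝ, ∀ x ∈ E, ∀ R r : ℝ, 0 < r → r < hFree E x R → hFree E x R ≤ R →
    (volume (thickening r E ∩ ball x R)).toReal ≤
      C * (hFree E x R / r) ^ (-α) * (volume (ball x R)).toReal}

open scoped Classical in
/-- The Muckenhoupt exponent of `E`. -/
def MuckExp {n : ℕ} (E : Set (EuclideanSpace ℝ (Fin n))) : ℝ :=
  if ∀ x ∈ E, ∀ R : ℝ, 0 < R → 0 < hFree E x R then sSup (MuckSet E) else 0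

end

/-!
Start from an `E`-free dyadic subcube `F` of `R`; it lies within distance `Q.l` of `Q`.
Apply weak porosity to a cube `X` of side about `Q.l` that contains a piece of `F` and is pushed
against `Q`. The boundary layer of `X` of relative width `c / (4n)` has measure at most `c|X| / 2`,
so it cannot contain the whole porosity family, and some member reaches the inner part of `X`.
That member is a free cube closer to `Q` by `c Q.l / (8n)`, with side at least `δ^{1/n} / 4`
times that of the piece. After `O(n / c)` steps a free cube penetrates `Q`; since every cube
inside `Q` contains a dyadic subcube of `Q` of a quarter of its side, this bounds `|𝓜(Q)|`.
-/

namespace Cube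

variable {n : ℕ}

lemma set_eq_preimage (P : Cube n) :
    P.set = WithLp.ofLp ⁻¹' univ.pi fun i => Ico (P.a i) (P.a i + P.l) := by
  ext x; simp [Cube.set]

lemma measurableSet (P : Cube n) : MeasurableSet P.set := by
  rw [set_eq_preimage]
  exact (MeasurableSet.univ_pi fun _ => measurableSet_Ico).preimage
    (PiLp.volume_preserving_ofLp _).measurable

lemma volume_set (P : Cube n) : volume P.set = ENNReal.ofReal (P.l ^ n) := by
  rw [set_eq_preimage, (PiLp.volume_preserving_ofLp _).measure_preimage
    (MeasurableSet.univ_pi fun _ => measurableSet_Ico).nullMeasurableSet, volume_pi_pi]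
  simp [Real.volume_Ico, ENNReal.ofReal_pow P.pos.le]

lemma volume_set_ne_top (P : Cube n) : volume P.set ≠ ⊤ := by
  simp [P.volume_set]

lemma volume_set_toReal (P : Cube n) : (volume P.set).toReal = P.l ^ n := by
  rw [volume_set, ENNReal.toReal_ofReal (pow_nonneg P.pos.le n)]

lemma set_subset_set_iff {P P' : Cube n} :
    P.set ⊆ P'.set ↔ ∀ i, P'.a i ≤ P.a i ∧ P.a i + P.l ≤ P'.a i + P'.l := by
  rw [set_eq_preimage, set_eq_preimage, (WithLp.ofLp_surjective 2).preimage_subset_preimage_iff,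
    univ_pi_subset_univ_pi_iff]
  simp [Ico_subset_Ico_iff, P.pos, Ico_eq_empty_iff]

lemma l_le_of_subset (hn : 0 < n) {P P' : Cube n} (h : P.set ⊆ P'.set) : P.l ≤ P'.l := by
  have := set_subset_set_iff.mp h ⟨0, hn⟩
  linarith

/-- `Q.IsNear d F`: the closure of `F` meets the closed `d`-neighbourhood of `Q` in the sup
metric; for `d < 0`, `F` reaches depth `-d` into `Q` in every coordinate. -/
def IsNear (Q : Cube n) (d : ℝ) (F : Cube n) : Prop :=
  ∀ i, Q.a i - d ≤ F.a i + F.l ∧ F.a i ≤ Q.a i + Q.l + d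

lemma IsNear.mono {Q F : Cube n} {d d' : ℝ} (h : Q.IsNear d F) (hd : d ≤ d') :
    Q.IsNear d' F :=
  fun i => ⟨by linarith [h i], by linarith [h i]⟩

lemma isNear_of_subset {Q R F : Cube n} (hQ : Q.set ⊆ R.set) (hF : F.set ⊆ R.set) :
    Q.IsNear (R.l - Q.l) F := fun i => by
  have := set_subset_set_iff.mp hQ i
  have := set_subset_set_iff.mp hF i
  constructor <;> linarith [F.pos]

lemma IsNear.exists_subset_inter {Q W : Cube n} {e : ℝ} (h : Q.IsNear (-e) W) (he : 0 < e)
    (heQ : e ≤ Q.l) : ∃ V : Cube n, V.set ⊆ W.set ∧ V.set ⊆ Q.set ∧ V.l = min W.l e := by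
  refine ⟨⟨WithLp.toLp 2 fun i => max (W.a i) (Q.a i), min W.l e, lt_min W.pos he⟩,
    set_subset_set_iff.mpr fun i => ?_, set_subset_set_iff.mpr fun i => ?_, rfl⟩ <;>
  · have := h i
    have := min_le_left W.l e
    have := min_le_right W.l e
    dsimp only
    rcases max_cases (W.a i) (Q.a i) with ⟨hm, _⟩ | ⟨hm, _⟩ <;> rw [hm] <;>
      constructor <;> linarith

end Cube

lemma exists_not_subset_of_measureReal_lt_sum {α ι : Type*} [MeasurableSpace α]
    {μ : Measure α} [Fintype ι] {s : ι → Set α} (hd : Pairwise (Function.onFun Disjoint s))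
    (hs : ∀ i, MeasurableSet (s i)) {T : Set α} (hT : μ T ≠ ⊤)
    (h : μ.real T < ∑ i, μ.real (s i)) : ∃ i, ¬ s i ⊆ T := by
  by_contra! hsub
  have := measureReal_mono (iUnion_subset hsub) hT
  rw [measureReal_iUnion_fintype hd hs fun i => measure_ne_top_of_subset (hsub i) hT] at this
  linarith

lemma pow_le_four_pow_mul_inv_pow_mul {n K : ℕ} {δ x m s : ℝ} (hn : 0 < n) (hδ0 : 0 < δ)
    (hδ1 : δ ≤ 1) (hx : 0 ≤ x) (hm : 0 ≤ m) (hxm : x ≤ 4 ^ K * m)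
    (hms : (δ ^ (n : ℝ)⁻¹ / 4) ^ (K + 1) * m ≤ s) :
    x ^ n ≤ 4 ^ (n * (2 * K + 2)) * δ⁻¹ ^ (2 * K + 2) * (s / 4) ^ n := by
  set e := δ ^ (n : ℝ)⁻¹
  have he : e ^ n = δ := Real.rpow_inv_natCast_pow hδ0.le hn.ne'
  have he0 : 0 < e := by positivity
  have he1 : e ≤ 1 := Real.rpow_le_one hδ0.le hδ1 (by positivity)
  have hxs : x ≤ (4 / e) ^ (2 * K + 2) * (s / 4) :=
    calc x ≤ 4 ^ K * m := hxm
      _ = 4 ^ (K + 1) * (4 / e) ^ (K + 1) * ((e / 4) ^ (K + 1) * m) / 4 := by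
        have : 4 / e * (e / 4) = 1 := by field_simp
        rw [mul_assoc (4 ^ (K + 1)), ← mul_assoc ((4 / e) ^ (K + 1)), ← mul_pow, this, one_pow]
        ring
      _ ≤ (4 / e) ^ (K + 1) * (4 / e) ^ (K + 1) * (s / 4) := by
        rw [mul_div_assoc]
        gcongr
        rw [le_div_iff₀ he0]
        linarith
      _ = (4 / e) ^ (2 * K + 2) * (s / 4) := by ring
  calc x ^ n ≤ ((4 / e) ^ (2 * K + 2) * (s / 4)) ^ n := by gcongr
    _ = 4 ^ (n * (2 * K + 2)) * δ⁻¹ ^ (2 * K + 2) * (s / 4) ^ n := by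
      rw [mul_pow, ← he, ← pow_mul, div_pow, inv_pow, ← pow_mul, mul_comm n, div_eq_mul_inv]

section

variable {n : ℕ} {E : Set (EuclideanSpace ℝ (Fin n))}

lemma IsDyadicSubcube.subset {P D : Cube n} (h : IsDyadicSubcube P D) : D.set ⊆ P.set := by
  obtain ⟨j, k, hk, hl, ha⟩ := h
  refine Cube.set_subset_set_iff.mpr fun i => ?_
  have hki : (k i : ℝ) + 1 ≤ 2 ^ j := by exact_mod_cast hk i
  have h0 : 0 ≤ P.l * k i / 2 ^ j := by have := P.pos; positivity
  have h1 : P.l * k i / 2 ^ j + P.l / 2 ^ j ≤ P.l := by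
    rw [← add_div, div_le_iff₀ (by positivity)]
    nlinarith [P.pos]
  rw [ha i, hl]
  constructor <;> linarith

lemma isDyadicSubcube_self (P : Cube n) : IsDyadicSubcube P P :=
  ⟨0, fun _ => 0, by simp, by simp, by simp⟩

lemma EFree.mono {C D : Cube n} (hC : EFree E C) (h : D.set ⊆ C.set) : EFree E D :=
  subset_eq_empty (inter_subset_inter_left E h) hC

lemma bddAbove_maxFree (E : Set (EuclideanSpace ℝ (Fin n))) (P : Cube n) :
    BddAbove {v : ℝ | ∃ Q : Cube n, IsDyadicSubcube P Q ∧ EFree E Q ∧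
      v = (volume Q.set).toReal} := by
  refine ⟨P.l ^ n, ?_⟩
  rintro v ⟨D, hD, -, rfl⟩
  rw [← P.volume_set_toReal]
  exact ENNReal.toReal_mono P.volume_set_ne_top (measure_mono hD.subset)

lemma le_maxFree {P D : Cube n} (hD : IsDyadicSubcube P D) (hE : EFree E D) :
    D.l ^ n ≤ maxFree E P :=
  D.volume_set_toReal ▸ le_csSup (bddAbove_maxFree E P) ⟨D, hD, hE, rfl⟩

lemma maxFree_nonneg (E : Set (EuclideanSpace ℝ (Fin n))) (P : Cube n) : 0 ≤ maxFree E P :=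
  Real.sSup_nonneg (by rintro v ⟨D, -, -, rfl⟩; exact ENNReal.toReal_nonneg)

lemma maxFree_le {P : Cube n} {b : ℝ} (hb : 0 ≤ b)
    (h : ∀ D : Cube n, IsDyadicSubcube P D → EFree E D → D.l ^ n ≤ b) : maxFree E P ≤ b :=
  Real.sSup_le (by rintro v ⟨D, hD, hDE, rfl⟩; exact D.volume_set_toReal ▸ h D hD hDE) hb

lemma exists_isDyadicSubcube_subset (hn : 0 < n) {C P : Cube n} (hCP : C.set ⊆ P.set) :
    ∃ D : Cube n, IsDyadicSubcube P D ∧ D.set ⊆ C.set ∧ C.l / 4 ≤ D.l := by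
  have hC := C.pos
  have hCP' := Cube.set_subset_set_iff.mp hCP
  obtain ⟨j, hj, hj'⟩ := exists_nat_pow_near (x := P.l / (C.l / 4)) (y := 2)
    (by rw [le_div_iff₀ (by positivity)]; linarith [Cube.l_le_of_subset hn hCP]) one_lt_two
  rw [le_div_iff₀ (by positivity)] at hj
  rw [div_lt_iff₀ (by positivity), pow_succ] at hj'
  set t := P.l / 2 ^ j with ht
  have htP : P.l = 2 ^ j * t := by rw [ht]; field_simp
  have htC : C.l / 4 ≤ t := by rw [ht, le_div_iff₀ (by positivity)]; linarith
  have htC' : 2 * t < C.l := by nlinarith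
  have ht0 : 0 < t := by linarith
  set k : Fin n → ℕ := fun i => ⌈(C.a i - P.a i) / t⌉₊
  have hk : ∀ i, C.a i ≤ P.a i + k i * t ∧ P.a i + k i * t < C.a i + t := fun i => by
    have h0 : 0 ≤ (C.a i - P.a i) / t := div_nonneg (by linarith [hCP' i]) ht0.le
    have h1 := Nat.le_ceil ((C.a i - P.a i) / t)
    have h2 := Nat.ceil_lt_add_one h0
    rw [div_le_iff₀ ht0] at h1
    rw [← sub_lt_iff_lt_add, lt_div_iff₀ ht0] at h2
    constructor <;> nlinarith
  refine ⟨⟨WithLp.toLp 2 fun i => P.a i + k i * t, t, ht0⟩, ⟨j, k, fun i => ?_, rfl, fun i => ?_⟩,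
    Cube.set_subset_set_iff.mpr fun i => ?_, htC⟩
  · have : (k i : ℝ) * t < 2 ^ j * t := by linarith [hk i, hCP' i]
    exact_mod_cast lt_of_mul_lt_mul_right this ht0.le
  · simp only [ht]; ring
  · constructor <;> linarith [hk i]

lemma div_four_pow_le_maxFree (hn : 0 < n) {C P : Cube n} (hCP : C.set ⊆ P.set)
    (hC : EFree E C) : (C.l / 4) ^ n ≤ maxFree E P := by
  obtain ⟨D, hD, hDC, hl⟩ := exists_isDyadicSubcube_subset hn hCP
  exact (pow_le_pow_left₀ (by linarith [C.pos]) hl n).trans (le_maxFree hD (hC.mono hDC))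

variable {c δ : ℝ}

lemma WeaklyPorousWith.exists_free_mem_inner {γ : ℝ} (hWP : WeaklyPorousWith E c δ)
    (hn : 0 < n) (hδ : 0 ≤ δ) (hγ0 : 0 ≤ γ) (hγ1 : 2 * γ < 1) (hγc : 2 * n * γ < c)
    {X C : Cube n} (hCX : C.set ⊆ X.set) (hC : EFree E C) :
    ∃ W : Cube n, EFree E W ∧ δ * (C.l / 4) ^ n ≤ W.l ^ n ∧
      ∃ p ∈ W.set, ∀ i, X.a i + γ * X.l ≤ p i ∧ p i ≤ X.a i + X.l - γ * X.l := by
  obtain ⟨N, W, hW, hdisj, hbig, hsum⟩ := hWP X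
  have hX := X.pos
  let Y : Cube n := ⟨WithLp.toLp 2 fun i => X.a i + γ * X.l, (1 - 2 * γ) * X.l, by nlinarith⟩
  have hYX : Y.set ⊆ X.set :=
    Cube.set_subset_set_iff.mpr fun i => ⟨by simp [Y]; positivity, by simp [Y]; nlinarith⟩
  have hlayer : volume.real (X.set \ Y.set) < ∑ k, volume.real (W k).set := by
    rw [measureReal_sdiff hYX Y.measurableSet X.volume_set_ne_top]
    simp only [measureReal_def, Cube.volume_set_toReal] at hsum ⊢
    have hpow : 1 - n * (2 * γ) ≤ (1 - 2 * γ) ^ n := by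
      simpa [sub_eq_add_neg] using one_add_mul_le_pow (a := -(2 * γ)) (by linarith) n
    have hXn : 0 < X.l ^ n := by positivity
    calc X.l ^ n - ((1 - 2 * γ) * X.l) ^ n ≤ 2 * n * γ * X.l ^ n := by
          rw [mul_pow]; nlinarith
      _ < c * X.l ^ n := by gcongr
      _ ≤ _ := hsum
  obtain ⟨k, hk⟩ := exists_not_subset_of_measureReal_lt_sum hdisj (fun k => (W k).measurableSet)
    (measure_ne_top_of_subset sdiff_subset X.volume_set_ne_top) hlayer
  obtain ⟨p, hpW, hpY⟩ : ∃ p ∈ (W k).set, p ∈ Y.set := by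
    obtain ⟨p, hpW, hpXY⟩ := not_subset.mp hk
    exact ⟨p, hpW, by_contra fun h => hpXY ⟨(hW k).1.subset hpW, h⟩⟩
  refine ⟨W k, (hW k).2, ?_, p, hpW, fun i => ?_⟩
  · calc δ * (C.l / 4) ^ n ≤ δ * maxFree E X :=
          mul_le_mul_of_nonneg_left (div_four_pow_le_maxFree hn hCX hC) hδ
      _ ≤ (W k).l ^ n := (W k).volume_set_toReal ▸ hbig k
  · have := hpY i
    simp only [Y] at this
    constructor <;> linarith

lemma WeaklyPorousWith.exists_free_isNear_sub {ρ : ℝ} (hWP : WeaklyPorousWith E c δ)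
    (hn : 0 < n) (hc0 : 0 < c) (hc1 : c < 1) (hδ : 0 ≤ δ) (hρ : 0 ≤ ρ) (hρδ : (4 * ρ) ^ n ≤ δ)
    {Q F : Cube n} (hF : EFree E F) {d η θ : ℝ} (hd : 0 ≤ d) (hη : 8 * n * η ≤ c * Q.l)
    (hθ : 0 < θ) (hθF : θ ≤ F.l) (hθη : θ ≤ η) (hnear : Q.IsNear d F) :
    ∃ W : Cube n, EFree E W ∧ Q.IsNear (d - η) W ∧ ρ * θ ≤ W.l := by
  have hnR : (1 : ℝ) ≤ n := by exact_mod_cast hn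
  have hQ := Q.pos
  let C : Cube n := ⟨WithLp.toLp 2 fun i => max (F.a i) (Q.a i - d - θ), θ, hθ⟩
  have hC : ∀ i, F.a i ≤ C.a i ∧ Q.a i - d - θ ≤ C.a i ∧ C.a i ≤ F.a i + F.l - θ ∧
      C.a i ≤ Q.a i + Q.l + d := fun i =>
    ⟨le_max_left _ _, le_max_right _ _, max_le (by linarith) (by linarith [hnear i]),
      max_le (hnear i).2 (by linarith)⟩
  have hCF : C.set ⊆ F.set :=
    Cube.set_subset_set_iff.mpr fun i => ⟨(hC i).1, by linarith [(hC i).2.2.1]⟩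
  let X : Cube n := ⟨WithLp.toLp 2 fun i => max (Q.a i - d - θ) (C.a i - Q.l), Q.l + θ,
    by linarith⟩
  have hX : ∀ i, Q.a i - d - θ ≤ X.a i ∧ C.a i - Q.l ≤ X.a i ∧ X.a i ≤ C.a i ∧
      X.a i ≤ Q.a i + d := fun i =>
    ⟨le_max_left _ _, le_max_right _ _, max_le (hC i).2.1 (by linarith),
      max_le (by linarith) (by linarith [(hC i).2.2.2])⟩
  have hCX : C.set ⊆ X.set :=
    Cube.set_subset_set_iff.mpr fun i => ⟨(hX i).2.2.1, by linarith [(hX i).2.1]⟩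
  set γ := c / (4 * n)
  have hγ : 4 * n * γ = c := by simp only [γ]; field_simp
  have hγ0 : 0 ≤ γ := by positivity
  obtain ⟨W, hW, hWl, p, hpW, hp⟩ := hWP.exists_free_mem_inner hn hδ hγ0
    (by nlinarith) (by nlinarith) hCX (hF.mono hCF)
  -- passing to the inner part of `X` gains `γ * X.l ≥ 2η`; placing `X` over `F` lost `θ ≤ η`
  have hγX : 2 * η ≤ γ * X.l := by
    change 2 * η ≤ γ * (Q.l + θ)
    nlinarith
  refine ⟨W, hW, fun i => ?_, ?_⟩
  · have := hp i
    have := hpW i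
    have := hX i
    constructor <;> linarith
  · have hρθ : (ρ * θ) ^ n ≤ W.l ^ n :=
      calc (ρ * θ) ^ n = (4 * ρ) ^ n * (θ / 4) ^ n := by rw [← mul_pow]; ring_nf
        _ ≤ δ * (θ / 4) ^ n := by gcongr
        _ ≤ W.l ^ n := hWl
    exact (pow_le_pow_iff_left₀ (by positivity) W.pos.le hn.ne').mp hρθ

lemma WeaklyPorousWith.exists_free_isNear_iterate {ρ : ℝ} (hWP : WeaklyPorousWith E c δ)
    (hn : 0 < n) (hc0 : 0 < c) (hc1 : c < 1) (hδ : 0 ≤ δ) (hρ0 : 0 ≤ ρ) (hρ1 : ρ ≤ 1)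
    (hρδ : (4 * ρ) ^ n ≤ δ) {Q F₀ : Cube n} (hF₀ : EFree E F₀) {d₀ η : ℝ} (hη0 : 0 < η)
    (hη : 8 * n * η ≤ c * Q.l) (h₀ : Q.IsNear d₀ F₀) (k : ℕ) :
    ∃ F : Cube n, EFree E F ∧ Q.IsNear (max (d₀ - k * η) 0) F ∧ ρ ^ k * min F₀.l η ≤ F.l := by
  induction k with
  | zero => exact ⟨F₀, hF₀, h₀.mono (by simp), by simp⟩
  | succ k ih =>
    obtain ⟨F, hF, hnear, hl⟩ := ih
    obtain ⟨W, hW, hWnear, hWl⟩ := hWP.exists_free_isNear_sub hn hc0 hc1 hδ hρ0 hρδ hF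
      (le_max_right _ _) hη (lt_min F.pos hη0) (min_le_left _ _) (min_le_right _ _) hnear
    refine ⟨W, hW, hWnear.mono ?_, ?_⟩
    · rw [← max_sub_sub_right]
      push_cast
      exact max_le_max (by linarith) (by linarith)
    · have hm : ρ ^ k * min F₀.l η ≤ min F.l η :=
        le_min hl <| (mul_le_of_le_one_left (lt_min F₀.pos hη0).le (pow_le_one₀ hρ0 hρ1)).trans
          (min_le_right _ _)
      calc ρ ^ (k + 1) * min F₀.l η = ρ * (ρ ^ k * min F₀.l η) := by ring
        _ ≤ ρ * min F.l η := by gcongr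
        _ ≤ W.l := hWl

lemma WeaklyPorousWith.exists_free_subset_of_isNear {ρ : ℝ} (hWP : WeaklyPorousWith E c δ)
    (hn : 0 < n) (hc0 : 0 < c) (hc1 : c < 1) (hδ : 0 ≤ δ) (hρ0 : 0 ≤ ρ) (hρ1 : ρ ≤ 1)
    (hρδ : (4 * ρ) ^ n ≤ δ) {Q F : Cube n} (hF : EFree E F) {d η : ℝ} (hη0 : 0 < η)
    (hη : 8 * n * η ≤ c * Q.l) {K : ℕ} (hK : d ≤ K * η) (hnear : Q.IsNear d F) :
    ∃ V : Cube n, V.set ⊆ Q.set ∧ EFree E V ∧ ρ ^ (K + 1) * min F.l η ≤ V.l := by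
  have hηQ : η ≤ Q.l := by
    have : (1 : ℝ) ≤ n := by exact_mod_cast hn
    nlinarith [Q.pos]
  obtain ⟨F', hF', hnear', hl'⟩ :=
    hWP.exists_free_isNear_iterate hn hc0 hc1 hδ hρ0 hρ1 hρδ hF hη0 hη hnear K
  rw [max_eq_right (by linarith)] at hnear'
  obtain ⟨W, hW, hWnear, hWl⟩ := hWP.exists_free_isNear_sub hn hc0 hc1 hδ hρ0 hρδ hF' le_rfl hη
    (lt_min F'.pos hη0) (min_le_left _ _) (min_le_right _ _) hnear'
  rw [zero_sub] at hWnear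
  obtain ⟨V, hVW, hVQ, hVl⟩ := hWnear.exists_subset_inter hη0 hηQ
  have hm : ∀ j, ρ ^ j * min F.l η ≤ η := fun j =>
    (mul_le_of_le_one_left (lt_min F.pos hη0).le (pow_le_one₀ hρ0 hρ1)).trans (min_le_right _ _)
  refine ⟨V, hVQ, hW.mono hVW, hVl ▸ le_min ?_ (hm _)⟩
  calc ρ ^ (K + 1) * min F.l η = ρ * (ρ ^ K * min F.l η) := by ring
    _ ≤ ρ * min F'.l η := by gcongr; exact le_min hl' (hm K)
    _ ≤ W.l := hWl

lemma WeaklyPorousWith.side_pow_le_maxFree (hWP : WeaklyPorousWith E c δ) (hn : 0 < n)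
    (hc0 : 0 < c) (hc1 : c < 1) (hδ0 : 0 < δ) (hδ1 : δ ≤ 1) {Q R F : Cube n}
    (hQR : Q.set ⊆ R.set) (hRQ : R.l = 2 * Q.l) (hFR : F.set ⊆ R.set) (hF : EFree E F) :
    F.l ^ n ≤ 4 ^ (n * (2 * ⌈16 * n / c⌉₊ + 2)) * δ⁻¹ ^ (2 * ⌈16 * n / c⌉₊ + 2) *
      maxFree E Q := by
  set K := ⌈16 * n / c⌉₊
  set η := c * Q.l / (8 * n)
  set e := δ ^ (n : ℝ)⁻¹
  have hQ := Q.pos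
  have hη0 : 0 < η := by positivity
  have hη : 8 * n * η = c * Q.l := by simp only [η]; field_simp
  have hKη : 2 * Q.l ≤ K * η := by
    have : 16 * n / c ≤ K := Nat.le_ceil _
    rw [div_le_iff₀ hc0] at this
    nlinarith
  have he : e ^ n = δ := Real.rpow_inv_natCast_pow hδ0.le hn.ne'
  have he0 : 0 < e := by positivity
  have he1 : e ≤ 1 := Real.rpow_le_one hδ0.le hδ1 (by positivity)
  have h4e : (4 * (e / 4)) ^ n ≤ δ := by rw [mul_div_cancel₀ _ four_ne_zero, he]
  have hnear := Cube.isNear_of_subset hQR hFR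
  rw [hRQ, two_mul, add_sub_cancel_right] at hnear
  obtain ⟨V, hVQ, hV, hVl⟩ := hWP.exists_free_subset_of_isNear hn hc0 hc1 hδ0.le
    (by positivity) (by linarith) h4e hF hη0 hη.le (by linarith) hnear
  have hFm : F.l ≤ 4 ^ K * min F.l η := by
    have hFR' : F.l ≤ 2 * Q.l := hRQ ▸ Cube.l_le_of_subset hn hFR
    have hK4 : (K : ℝ) ≤ 4 ^ K := by exact_mod_cast (Nat.lt_pow_self (by norm_num)).le
    rcases min_cases F.l η with ⟨h, _⟩ | ⟨h, _⟩ <;> rw [h]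
    · exact le_mul_of_one_le_left F.pos.le (one_le_pow₀ (by norm_num))
    · nlinarith
  refine (pow_le_four_pow_mul_inv_pow_mul hn hδ0 hδ1 F.pos.le (lt_min F.pos hη0).le hFm
    hVl).trans ?_
  gcongr
  exact div_four_pow_le_maxFree hn hVQ hV

end

lemma maxFree_le_maxFree_of_dim_zero (E : Set (EuclideanSpace ℝ (Fin 0))) (P P' : Cube 0) :
    maxFree E P ≤ maxFree E P' :=
  maxFree_le (maxFree_nonneg E P') fun D _ hD => by
    simpa using le_maxFree (isDyadicSubcube_self P') (hD.mono fun _ _ i => i.elim0)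

/-- If `E` is weakly porous with constants `c, δ` and `Q ⊆ R` are cubes with
`|R| = 2ⁿ |Q|`, then there is `k = k(n,c) ∈ ℕ` with `|𝓜(R)| ≤ 4^{nk} δ^{-k} |𝓜(Q)|`. -/
theorem weaklyPorous_maxFree_comparison (n : ℕ) (c : ℝ) (hc0 : 0 < c) (hc1 : c < 1) :
    ∃ k : ℕ, ∀ δ : ℝ, 0 < δ → δ < 1 →
      ∀ E : Set (EuclideanSpace ℝ (Fin n)), WeaklyPorousWith E c δ →
        ∀ Q R : Cube n, Q.set ⊆ R.set →
          (volume R.set).toReal = 2 ^ n * (volume Q.set).toReal →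
          maxFree E R ≤ 4 ^ (n * k) * δ⁻¹ ^ k * maxFree E Q := by
  refine ⟨2 * ⌈16 * n / c⌉₊ + 2, fun δ hδ0 hδ1 E hWP Q R hQR hvol => ?_⟩
  rcases n.eq_zero_or_pos with rfl | hn
  · refine (maxFree_le_maxFree_of_dim_zero E R Q).trans
      (le_mul_of_one_le_left (maxFree_nonneg E Q) ?_)
    simpa using one_le_pow₀ (one_le_inv₀ hδ0 |>.mpr hδ1.le)
  have hRQ : R.l = 2 * Q.l := by
    rw [Cube.volume_set_toReal, Cube.volume_set_toReal, ← mul_pow] at hvol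
    exact (pow_left_inj₀ R.pos.le (by linarith [Q.pos]) hn.ne').mp hvol
  exact maxFree_le (by have := maxFree_nonneg E Q; positivity) fun F hF hFE =>
    hWP.side_pow_le_maxFree hn hc0 hc1 hδ0 hδ1.le hQR hRQ hF.subset hFE
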